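/- arXiv:1706.03734 — 3 statements merged into one kernel-verified Lean document; each statement's English description precedes it below -/
import Mathlib

section
/- Let Z : [1,∞) → ℝ^k be a C² vector-valued function satisfying Z''(t) = A(t)Z'(t) + B(t)Z(t), where A(t), B(t) are continuous k×k matrix-valued functions with |A(t)| + t|B(t)| ≤ C₁ t^(−1−q) for some constants C₁ > 0 and q > 0. Then there is a constant C₂, depending only on C₁, Z(1), and Z'(1), such that |Z(t)| + t|Z'(t)| ≤ C₂ t for all t ≥ 1. -/
/-!
For `f t = (Z t, t • Z' t)`, normed by the maximum of its components, the equation gives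
`‖f' t‖ ≤ (t⁻¹ + C₁ t^(-1-q)) ‖f t‖`. The rate integrates to `log t + O(1)` since `q > 0`,
so by Gronwall `‖f t‖` grows at most linearly. Concretely, `‖f t‖` stays below
`c · t · exp (K (1 - t^(-q))) ≤ c · exp K · t`, whose logarithmic derivative
`t⁻¹ + K q t^(-1-q)` strictly exceeds the rate once `K q = 2 C₁`.
-/

open Real Set

theorem image_norm_le_of_norm_deriv_right_le_mul_norm {E : Type*} [NormedAddCommGroup E]
    [NormedSpace ℝ E] {f f' : ℝ → E} {φ B B' : ℝ → ℝ} {a b : ℝ}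
    (hf : ContinuousOn f (Icc a b))
    (hf' : ∀ x ∈ Ico a b, HasDerivWithinAt f (f' x) (Ici x) x)
    (hφ : ∀ x ∈ Ico a b, ‖f' x‖ ≤ φ x * ‖f x‖) (ha : ‖f a‖ ≤ B a)
    (hB : ContinuousOn B (Icc a b)) (hB' : ∀ x ∈ Ico a b, HasDerivWithinAt B (B' x) (Ici x) x)
    (hBφ : ∀ x ∈ Ico a b, φ x * B x < B' x) :
    ∀ ⦃x⦄, x ∈ Icc a b → ‖f x‖ ≤ B x :=
  image_norm_le_of_norm_deriv_right_lt_deriv_boundary' hf hf' ha hB hB' fun x hx hfx =>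
    (hφ x hx).trans_lt (hfx ▸ hBφ x hx)

theorem norm_prod_deriv_le_of_secondOrder {E : Type*} [NormedAddCommGroup E] [NormedSpace ℝ E]
    (A B : E →L[ℝ] E) (z z' : E) {t M : ℝ} (ht : 0 < t) (hM : ‖A‖ + t * ‖B‖ ≤ M) :
    ‖(z', z' + t • (A z' + B z))‖ ≤ (t⁻¹ + M) * ‖(z, t • z')‖ := by
  set N := ‖(z, t • z')‖
  have hz : ‖z‖ ≤ N := norm_fst_le (z, t • z')
  have htz' : t * ‖z'‖ ≤ N := by
    simpa only [norm_smul, norm_of_nonneg ht.le] using norm_snd_le (z, t • z')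
  have hz' : ‖z'‖ ≤ t⁻¹ * N := (le_inv_mul_iff₀ ht).2 htz'
  have hM0 : 0 ≤ M := (by positivity : 0 ≤ ‖A‖ + t * ‖B‖).trans hM
  have hz'' : t * ‖A z' + B z‖ ≤ M * N :=
    calc t * ‖A z' + B z‖ ≤ t * (‖A‖ * ‖z'‖ + ‖B‖ * ‖z‖) := by
          gcongr; exact norm_add_le_of_le (A.le_opNorm z') (B.le_opNorm z)
      _ = ‖A‖ * (t * ‖z'‖) + t * ‖B‖ * ‖z‖ := by ring
      _ ≤ ‖A‖ * N + t * ‖B‖ * N := by gcongr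
      _ ≤ M * N := by rw [← add_mul]; gcongr
  refine max_le ?_ ?_
  · nlinarith [norm_nonneg (z, t • z')]
  · calc ‖z' + t • (A z' + B z)‖ ≤ ‖z'‖ + t * ‖A z' + B z‖ :=
          (norm_add_le _ _).trans_eq (by rw [norm_smul, Real.norm_of_nonneg ht.le])
      _ ≤ (t⁻¹ + M) * N := by linarith

theorem norm_add_mul_norm_le_two_mul_norm_prod {E F : Type*} [SeminormedAddCommGroup E]
    [SeminormedAddCommGroup F] [NormedSpace ℝ F] {x : E} {y : F} {t : ℝ} (ht : 0 ≤ t) :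
    ‖x‖ + t * ‖y‖ ≤ 2 * ‖(x, t • y)‖ := by
  have hy := norm_snd_le (x, t • y)
  rw [norm_smul, Real.norm_of_nonneg ht] at hy
  linarith [norm_fst_le (x, t • y)]

noncomputable def growthBound (K q t : ℝ) : ℝ := t * exp (K * (1 - t ^ (-q)))

theorem growthBound_one (K q : ℝ) : growthBound K q 1 = 1 := by simp [growthBound]

theorem growthBound_pos {K q t : ℝ} (ht : 0 < t) : 0 < growthBound K q t := by
  unfold growthBound; positivity

theorem growthBound_le {K q t : ℝ} (hK : 0 ≤ K) (ht : 0 < t) :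
    growthBound K q t ≤ exp K * t := by
  rw [growthBound, mul_comm]
  gcongr
  nlinarith [rpow_nonneg ht.le (-q)]

theorem hasDerivAt_growthBound (K q : ℝ) {t : ℝ} (ht : 0 < t) :
    HasDerivAt (growthBound K q) ((t⁻¹ + K * q * t ^ (-1 - q)) * growthBound K q t) t := by
  have h : HasDerivAt (fun s => s * exp (K * (1 - s ^ (-q))))
      (1 * exp (K * (1 - t ^ (-q))) +
        t * (exp (K * (1 - t ^ (-q))) * (K * (0 - -q * t ^ (-q - 1))))) t :=
    (hasDerivAt_id' t).mul (((hasDerivAt_const t 1).sub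
      (hasDerivAt_rpow_const (Or.inl ht.ne'))).const_mul K).exp
  refine h.congr_deriv ?_
  rw [growthBound, show (-1 - q : ℝ) = -q - 1 by ring]
  field_simp
  ring

theorem stmt_0_general (k : ℕ) (Z Z' Z'' : ℝ → EuclideanSpace ℝ (Fin k))
    (A B : ℝ → (EuclideanSpace ℝ (Fin k) →L[ℝ] EuclideanSpace ℝ (Fin k)))
    (C₁ q : ℝ) (hC₁ : 0 < C₁) (hq : 0 < q)
    (hderiv1 : ∀ t ∈ Set.Ici (1:ℝ), HasDerivWithinAt Z (Z' t) (Set.Ici 1) t)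
    (hderiv2 : ∀ t ∈ Set.Ici (1:ℝ), HasDerivWithinAt Z' (Z'' t) (Set.Ici 1) t)
    (hode : ∀ t ∈ Set.Ici (1:ℝ), Z'' t = A t (Z' t) + B t (Z t))
    (hbound : ∀ t ∈ Set.Ici (1:ℝ), ‖A t‖ + t * ‖B t‖ ≤ C₁ * t ^ (-1 - q)) :
    ∃ C₂ : ℝ, ∀ t ∈ Set.Ici (1:ℝ), ‖Z t‖ + t * ‖Z' t‖ ≤ C₂ * t := by
  set K := 2 * C₁ / q
  set c := ‖(Z 1, Z' 1)‖ + 1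
  have hc : 0 < c := by positivity
  have hf : ∀ x ∈ Ici (1 : ℝ), HasDerivWithinAt (fun t => (Z t, t • Z' t))
      (Z' x, Z' x + x • (A x (Z' x) + B x (Z x))) (Ici 1) x := fun x hx => by
    have h := (hderiv1 x hx).prodMk ((hasDerivAt_id' x).hasDerivWithinAt.smul (hderiv2 x hx))
    rwa [one_smul, add_comm, hode x hx] at h
  have hB : ∀ x ∈ Ici (1 : ℝ), HasDerivAt (fun t => c * growthBound K q t)
      (c * ((x⁻¹ + K * q * x ^ (-1 - q)) * growthBound K q x)) x := fun x hx =>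
    (hasDerivAt_growthBound K q (by linarith [mem_Ici.1 hx])).const_mul c
  have hrate : ∀ x ∈ Ici (1 : ℝ), (x⁻¹ + C₁ * x ^ (-1 - q)) * (c * growthBound K q x) <
      c * ((x⁻¹ + K * q * x ^ (-1 - q)) * growthBound K q x) := fun x hx => by
    have hx0 : 0 < x := by linarith [mem_Ici.1 hx]
    have hslack : 0 < C₁ * x ^ (-1 - q) * (c * growthBound K q x) :=
      mul_pos (mul_pos hC₁ (rpow_pos_of_pos hx0 _)) (mul_pos hc (growthBound_pos hx0))
    rw [div_mul_cancel₀ _ hq.ne']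
    linarith
  refine ⟨2 * c * exp K, fun T hT => ?_⟩
  have hT0 : 0 < T := by linarith [mem_Ici.1 hT]
  have hfT : ‖(Z T, T • Z' T)‖ ≤ c * growthBound K q T :=
    image_norm_le_of_norm_deriv_right_le_mul_norm
      (fun x hx => (hf x hx.1).continuousWithinAt.mono Icc_subset_Ici_self)
      (fun x hx => (hf x hx.1).mono (Ici_subset_Ici.2 hx.1))
      (fun x hx => norm_prod_deriv_le_of_secondOrder _ _ _ _ (by linarith [hx.1]) (hbound x hx.1))
      (by simp [growthBound_one, c]) (fun x hx => (hB x hx.1).continuousAt.continuousWithinAt)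
      (fun x hx => (hB x hx.1).hasDerivWithinAt) (fun x hx => hrate x hx.1) (right_mem_Icc.2 hT)
  calc ‖Z T‖ + T * ‖Z' T‖ ≤ 2 * ‖(Z T, T • Z' T)‖ :=
        norm_add_mul_norm_le_two_mul_norm_prod hT0.le
    _ ≤ 2 * (c * (exp K * T)) := by grw [hfT, growthBound_le (by positivity) hT0]
    _ = 2 * c * exp K * T := by ring

/-- ODE growth lemma: a C² vector-valued solution of `Z'' = A Z' + B Z` on `[1,∞)`
with `‖A t‖ + t‖B t‖ ≤ C₁ t^(-1-q)` grows at most linearly. -/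
theorem stmt_0 (k : ℕ) (Z Z' Z'' : ℝ → EuclideanSpace ℝ (Fin k))
    (A B : ℝ → (EuclideanSpace ℝ (Fin k) →L[ℝ] EuclideanSpace ℝ (Fin k)))
    (C₁ q : ℝ) (hC₁ : 0 < C₁) (hq : 0 < q)
    (hA : ContinuousOn A (Set.Ici 1)) (hB : ContinuousOn B (Set.Ici 1))
    (hZ'cont : ContinuousOn Z' (Set.Ici 1)) (hZ''cont : ContinuousOn Z'' (Set.Ici 1))
    (hderiv1 : ∀ t ∈ Set.Ici (1:ℝ), HasDerivWithinAt Z (Z' t) (Set.Ici 1) t)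
    (hderiv2 : ∀ t ∈ Set.Ici (1:ℝ), HasDerivWithinAt Z' (Z'' t) (Set.Ici 1) t)
    (hode : ∀ t ∈ Set.Ici (1:ℝ), Z'' t = A t (Z' t) + B t (Z t))
    (hbound : ∀ t ∈ Set.Ici (1:ℝ), ‖A t‖ + t * ‖B t‖ ≤ C₁ * t ^ (-1 - q)) :
    ∃ C₂ : ℝ, ∀ t ∈ Set.Ici (1:ℝ), ‖Z t‖ + t * ‖Z' t‖ ≤ C₂ * t :=
  stmt_0_general k Z Z' Z'' A B C₁ q hC₁ hq hderiv1 hderiv2 hode hbound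
end

section
/- Let Z : [1,∞) → ℝ^k be a C² function satisfying Z''(t) = A(t)Z'(t) + B(t)Z(t) with |A(t)| + t|B(t)| ≤ C₁ t^(−1−q) for constants C₁ > 0, q > 0. If Z vanishes to infinite order at infinity (i.e. for every N > 0 there exists c_N with |Z(t)| ≤ c_N t^(−N) for all t ≥ 1), then Z is identically zero on [1,∞). -/
open Set Filter Topology Real

/-!
Write `F(t) = ‖Z t‖² + t² ‖Z' t‖²`. The equation and the bound on the coefficients give
`t² ‖Z''‖ ≤ C₁ (t ‖Z'‖ + ‖Z‖)`, hence `|t F'(t)| ≤ K F(t)` with `K = 3 (1 + C₁)`: the weighted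
energy `t^K F(t)` is nondecreasing and `t^(-K) F(t)` is nonincreasing. The latter makes `Z''` grow at
most polynomially, and a first-order Taylor expansion of `Z` over a step `t^(-p)` with `p` large then
shows that `Z'` vanishes to infinite order as well. So `t^K F(t) → 0`, and a nonnegative
nondecreasing function with limit `0` vanishes.
-/

theorem norm_sub_sub_smul_le_of_norm_deriv2_le {E : Type*} [NormedAddCommGroup E]
    [NormedSpace ℝ E] {f f' f'' : ℝ → E} {a b M : ℝ} (hab : a ≤ b)
    (hf : ∀ x ∈ Icc a b, HasDerivWithinAt f (f' x) (Icc a b) x)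
    (hf' : ∀ x ∈ Icc a b, HasDerivWithinAt f' (f'' x) (Icc a b) x)
    (hM : ∀ x ∈ Icc a b, ‖f'' x‖ ≤ M) :
    ‖f b - f a - (b - a) • f' a‖ ≤ M * (b - a) ^ 2 := by
  have ha : a ∈ Icc a b := left_mem_Icc.2 hab
  have hb : b ∈ Icc a b := right_mem_Icc.2 hab
  have hM0 : 0 ≤ M := (norm_nonneg _).trans (hM a ha)
  have hf'_sub : ∀ x ∈ Icc a b, ‖f' x - f' a‖ ≤ M * (b - a) := fun x hx =>
    calc ‖f' x - f' a‖ ≤ M * ‖x - a‖ :=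
          (convex_Icc a b).norm_image_sub_le_of_norm_hasDerivWithin_le hf' hM ha hx
      _ ≤ M * (b - a) := by
          rw [Real.norm_of_nonneg (sub_nonneg.2 hx.1)]
          exact mul_le_mul_of_nonneg_left (by linarith [hx.2]) hM0
  have hg : ∀ x ∈ Icc a b, HasDerivWithinAt (fun y => f y - (y - a) • f' a)
      (f' x - f' a) (Icc a b) x := fun x hx =>
    ((hf x hx).sub (((hasDerivWithinAt_id x _).sub_const a).smul_const (f' a))).congr_deriv
      (by rw [one_smul])
  have := (convex_Icc a b).norm_image_sub_le_of_norm_hasDerivWithin_le hg hf'_sub ha hb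
  rw [Real.norm_of_nonneg (sub_nonneg.2 hab), sub_self, zero_smul, sub_zero, sub_right_comm] at this
  rwa [sq, ← mul_assoc]

theorem monotoneOn_rpow_mul_of_hasDerivWithinAt {f f' : ℝ → ℝ} {a e : ℝ} (ha : 0 < a)
    (hf : ∀ x ∈ Ici a, HasDerivWithinAt f (f' x) (Ici a) x)
    (hf' : ∀ x ∈ Ioi a, 0 ≤ e * f x + x * f' x) :
    MonotoneOn (fun x => x ^ e * f x) (Ici a) := by
  have hderiv : ∀ x ∈ Ici a, HasDerivWithinAt (fun x => x ^ e * f x)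
      (e * x ^ (e - 1) * f x + x ^ e * f' x) (Ici a) x := fun x hx =>
    ((hasDerivAt_rpow_const (Or.inl (ha.trans_le hx).ne')).hasDerivWithinAt).mul (hf x hx)
  refine monotoneOn_of_hasDerivWithinAt_nonneg (convex_Ici a)
    (f' := fun x => e * x ^ (e - 1) * f x + x ^ e * f' x)
    (fun x hx => (hderiv x hx).continuousWithinAt) (fun x hx => ?_) (fun x hx => ?_)
  · rw [interior_Ici] at hx ⊢
    exact (hderiv x (Ioi_subset_Ici_self hx)).mono Ioi_subset_Ici_self
  · rw [interior_Ici] at hx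
    have hx0 : 0 < x := ha.trans hx
    calc 0 ≤ x ^ (e - 1) * (e * f x + x * f' x) := mul_nonneg (rpow_nonneg hx0.le _) (hf' x hx)
      _ = e * x ^ (e - 1) * f x + x ^ e * f' x := by
          rw [show x ^ e = x ^ (e - 1) * x by rw [← rpow_add_one hx0.ne']; ring_nf]
          ring

theorem le_mul_rpow_of_mul_deriv_le {f f' : ℝ → ℝ} {K x : ℝ}
    (hf : ∀ x ∈ Ici (1 : ℝ), HasDerivWithinAt f (f' x) (Ici 1) x)
    (hf' : ∀ x ∈ Ioi (1 : ℝ), x * f' x ≤ K * f x) (hx : 1 ≤ x) :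
    f x ≤ f 1 * x ^ K := by
  have hanti := monotoneOn_rpow_mul_of_hasDerivWithinAt (e := -K) one_pos
    (fun x hx => (hf x hx).neg) fun x hx => by simp only [Pi.neg_apply]; linarith [hf' x hx]
  have h := hanti self_mem_Ici hx hx
  simp only [Pi.neg_apply, one_rpow, one_mul, rpow_neg (zero_le_one.trans hx)] at h
  rw [mul_neg, neg_le_neg_iff, inv_mul_le_iff₀ (rpow_pos_of_pos (one_pos.trans_le hx) K)] at h
  linarith

theorem mul_norm_add_sq_mul_norm_le {E F : Type*} [SeminormedAddCommGroup E] [NormedSpace ℝ E]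
    [SeminormedAddCommGroup F] [NormedSpace ℝ F] {A B : E →L[ℝ] F} {t C q : ℝ} (ht : 1 ≤ t)
    (hC : 0 ≤ C) (hq : 0 ≤ q) (h : ‖A‖ + t * ‖B‖ ≤ C * t ^ (-1 - q)) :
    t * ‖A‖ + t ^ 2 * ‖B‖ ≤ C := by
  have ht0 : 0 < t := one_pos.trans_le ht
  calc t * ‖A‖ + t ^ 2 * ‖B‖ = t * (‖A‖ + t * ‖B‖) := by ring
    _ ≤ t * (C * t ^ (-1 - q)) := mul_le_mul_of_nonneg_left h ht0.le
    _ = C * t ^ (-q) := by rw [mul_left_comm, mul_comm t, ← rpow_add_one ht0.ne']; ring_nf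
    _ ≤ C := mul_le_of_le_one_right hC (rpow_le_one_of_one_le_of_nonpos ht (by linarith))

theorem sq_mul_norm_apply_add_apply_le {E F : Type*} [SeminormedAddCommGroup E]
    [NormedSpace ℝ E] [SeminormedAddCommGroup F] [NormedSpace ℝ F] {A B : E →L[ℝ] F}
    {t C : ℝ} (ht : 0 ≤ t) (h : t * ‖A‖ + t ^ 2 * ‖B‖ ≤ C) (x y : E) :
    t ^ 2 * ‖A y + B x‖ ≤ C * (t * ‖y‖ + ‖x‖) := by
  have hA : t * ‖A‖ ≤ C := by nlinarith [norm_nonneg B]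
  have hB : t ^ 2 * ‖B‖ ≤ C := by nlinarith [norm_nonneg A]
  calc t ^ 2 * ‖A y + B x‖ ≤ t ^ 2 * (‖A‖ * ‖y‖ + ‖B‖ * ‖x‖) := by
        gcongr
        exact (norm_add_le _ _).trans (add_le_add (A.le_opNorm y) (B.le_opNorm x))
    _ = t * ‖A‖ * (t * ‖y‖) + t ^ 2 * ‖B‖ * ‖x‖ := by ring
    _ ≤ C * (t * ‖y‖) + C * ‖x‖ := by gcongr
    _ = C * (t * ‖y‖ + ‖x‖) := by ring

def VanishesToInfiniteOrder {E : Type*} [Norm E] (f : ℝ → E) : Prop :=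
  ∀ N : ℝ, 0 < N → ∃ c : ℝ, ∀ t ∈ Ici (1 : ℝ), ‖f t‖ ≤ c * t ^ (-N)

namespace VanishesToInfiniteOrder

variable {E : Type*} [NormedAddCommGroup E]

theorem tendsto_rpow_mul_norm {f : ℝ → E} (hf : VanishesToInfiniteOrder f) (e : ℝ) :
    Tendsto (fun t => t ^ e * ‖f t‖) atTop (𝓝 0) := by
  obtain ⟨c, hc⟩ := hf (|e| + 1) (by positivity)
  have hlim : Tendsto (fun t : ℝ => c * t ^ (-(|e| + 1 - e))) atTop (𝓝 0) := by
    simpa only [mul_zero] using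
      (tendsto_rpow_neg_atTop (by linarith [le_abs_self e] : 0 < |e| + 1 - e)).const_mul c
  refine tendsto_of_tendsto_of_tendsto_of_le_of_le' tendsto_const_nhds hlim ?_ ?_
  · filter_upwards [eventually_ge_atTop 0] with t ht using by positivity
  · filter_upwards [eventually_ge_atTop 1] with t ht
    have ht0 : 0 < t := one_pos.trans_le ht
    calc t ^ e * ‖f t‖ ≤ t ^ e * (c * t ^ (-(|e| + 1))) :=
          mul_le_mul_of_nonneg_left (hc t ht) (rpow_nonneg ht0.le e)
      _ = c * t ^ (-(|e| + 1 - e)) := by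
          rw [mul_left_comm, ← rpow_add ht0]; ring_nf

theorem deriv_of_norm_deriv2_le_rpow [NormedSpace ℝ E] {f f' f'' : ℝ → E} {D P : ℝ}
    (hf : VanishesToInfiniteOrder f) (hP : 0 ≤ P)
    (hf' : ∀ t ∈ Ici (1 : ℝ), HasDerivWithinAt f (f' t) (Ici 1) t)
    (hf'' : ∀ t ∈ Ici (1 : ℝ), HasDerivWithinAt f' (f'' t) (Ici 1) t)
    (hD : ∀ t ∈ Ici (1 : ℝ), ‖f'' t‖ ≤ D * t ^ P) :
    VanishesToInfiniteOrder f' := by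
  intro N hN
  obtain ⟨c, hc⟩ := hf (2 * N + P) (by linarith)
  have hc0 : 0 ≤ c := by simpa using (norm_nonneg _).trans (hc 1 self_mem_Ici)
  have hD0 : 0 ≤ D := by simpa using (norm_nonneg _).trans (hD 1 self_mem_Ici)
  refine ⟨2 * c + 2 ^ P * D, fun T (hT : 1 ≤ T) => ?_⟩
  have hT0 : 0 < T := one_pos.trans_le hT
  -- With the step `h = T ^ (-(N + P))` both the increment of `f` over `[T, T + h]` and the
  -- Taylor remainder `D (2T) ^ P h ^ 2` are `O(T ^ (-N) h)`.
  set h := T ^ (-(N + P)) with hh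
  have hh0 : 0 < h := rpow_pos_of_pos hT0 _
  have hh1 : h ≤ 1 := rpow_le_one_of_one_le_of_nonpos hT (by linarith)
  have hsub : Icc T (T + h) ⊆ Ici 1 := fun x hx => hT.trans hx.1
  have htaylor := norm_sub_sub_smul_le_of_norm_deriv2_le (M := D * (2 * T) ^ P)
    (by linarith : T ≤ T + h) (fun x hx => (hf' x (hsub hx)).mono hsub)
    (fun x hx => (hf'' x (hsub hx)).mono hsub) fun x hx =>
      (hD x (hsub hx)).trans (mul_le_mul_of_nonneg_left
        (rpow_le_rpow (hT0.le.trans hx.1) (by linarith [hx.2]) hP) hD0)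
  rw [add_sub_cancel_left] at htaylor
  have hfT : ‖f T‖ ≤ c * T ^ (-(2 * N + P)) := hc T hT
  have hfTh : ‖f (T + h)‖ ≤ c * T ^ (-(2 * N + P)) := (hc (T + h) (hsub ⟨by linarith, le_rfl⟩)).trans
    (mul_le_mul_of_nonneg_left (rpow_le_rpow_of_nonpos hT0 (by linarith) (by linarith)) hc0)
  have key : h * ‖f' T‖ ≤ 2 * c * T ^ (-(2 * N + P)) + D * (2 * T) ^ P * h ^ 2 :=
    calc h * ‖f' T‖ = ‖h • f' T‖ := by rw [norm_smul, Real.norm_of_nonneg hh0.le]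
      _ ≤ ‖f (T + h)‖ + ‖f T‖ + ‖f (T + h) - f T - h • f' T‖ := by
          have := norm_sub_le (f (T + h) - f T) (f (T + h) - f T - h • f' T)
          have := norm_sub_le (f (T + h)) (f T)
          rw [sub_sub_cancel] at *
          linarith
      _ ≤ 2 * c * T ^ (-(2 * N + P)) + D * (2 * T) ^ P * h ^ 2 := by linarith
  have e1 : T ^ (-(2 * N + P)) = T ^ (-N) * h := by rw [hh, ← rpow_add hT0]; ring_nf
  have e2 : (2 * T) ^ P * h ^ 2 = 2 ^ P * T ^ (-N) * h := by
    rw [mul_rpow zero_le_two hT0.le, sq, hh, ← mul_assoc, mul_assoc _ (T ^ P), ← rpow_add hT0]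
    ring_nf
  rw [e1, mul_assoc D, e2] at key
  refine le_of_mul_le_mul_left ?_ hh0
  linarith

end VanishesToInfiniteOrder

section Energy

variable {E : Type*} [NormedAddCommGroup E] {Z Z' Z'' : ℝ → E} {t : ℝ}

def energy (Z Z' : ℝ → E) (t : ℝ) : ℝ := ‖Z t‖ ^ 2 + t ^ 2 * ‖Z' t‖ ^ 2

theorem energy_nonneg : 0 ≤ energy Z Z' t := by unfold energy; positivity

theorem norm_le_sqrt_energy : ‖Z t‖ ≤ √(energy Z Z' t) :=
  le_sqrt_of_sq_le (by unfold energy; nlinarith [sq_nonneg (t * ‖Z' t‖)])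

theorem mul_norm_le_sqrt_energy : t * ‖Z' t‖ ≤ √(energy Z Z' t) :=
  le_sqrt_of_sq_le (by unfold energy; nlinarith [sq_nonneg ‖Z t‖])

theorem tendsto_rpow_mul_energy (hZ : VanishesToInfiniteOrder Z)
    (hZ' : VanishesToInfiniteOrder Z') (K : ℝ) :
    Tendsto (fun t => t ^ K * energy Z Z' t) atTop (𝓝 0) := by
  have hlim := ((hZ.tendsto_rpow_mul_norm (K / 2)).pow 2).add
    ((hZ'.tendsto_rpow_mul_norm (K / 2 + 1)).pow 2)
  rw [zero_pow two_ne_zero, zero_add] at hlim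
  refine hlim.congr' ?_
  filter_upwards [eventually_gt_atTop 0] with t ht
  have e1 : (t ^ (K / 2)) ^ 2 = t ^ K := by rw [← rpow_mul_natCast ht.le]; ring_nf
  have e2 : (t ^ (K / 2 + 1)) ^ 2 = t ^ K * t ^ 2 := by
    rw [← rpow_mul_natCast ht.le, ← rpow_natCast, ← rpow_add ht]; ring_nf
  unfold energy
  rw [mul_pow, mul_pow, e1, e2]
  ring

variable [InnerProductSpace ℝ E] {C : ℝ}

def energyDeriv (Z Z' Z'' : ℝ → E) (t : ℝ) : ℝ :=
  2 * inner ℝ (Z t) (Z' t) + 2 * t * ‖Z' t‖ ^ 2 + 2 * t ^ 2 * inner ℝ (Z' t) (Z'' t)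

theorem hasDerivWithinAt_energy {s : Set ℝ} (hZ : HasDerivWithinAt Z (Z' t) s t)
    (hZ' : HasDerivWithinAt Z' (Z'' t) s t) :
    HasDerivWithinAt (energy Z Z') (energyDeriv Z Z' Z'' t) s t :=
  (hZ.norm_sq.add (((hasDerivAt_pow 2 t).hasDerivWithinAt).mul hZ'.norm_sq)).congr_deriv
    (by unfold energyDeriv; push_cast; ring)

theorem abs_mul_energyDeriv_le (hC : 0 ≤ C) (ht : 0 ≤ t)
    (hZ'' : t ^ 2 * ‖Z'' t‖ ≤ C * (t * ‖Z' t‖ + ‖Z t‖)) :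
    |t * energyDeriv Z Z' Z'' t| ≤ 3 * (1 + C) * energy Z Z' t := by
  set a := ‖Z t‖
  set b := t * ‖Z' t‖
  have ha : 0 ≤ a := norm_nonneg _
  have hb : 0 ≤ b := by positivity
  have h1 : |2 * t * inner ℝ (Z t) (Z' t)| ≤ 2 * a * b := by
    rw [abs_mul, abs_of_nonneg (by positivity)]
    nlinarith [abs_real_inner_le_norm (Z t) (Z' t)]
  have h2 : |2 * t ^ 3 * inner ℝ (Z' t) (Z'' t)| ≤ 2 * C * b * (b + a) := by
    rw [abs_mul, abs_of_nonneg (by positivity)]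
    calc 2 * t ^ 3 * |inner ℝ (Z' t) (Z'' t)| ≤ 2 * t ^ 3 * (‖Z' t‖ * ‖Z'' t‖) := by
          gcongr; exact abs_real_inner_le_norm _ _
      _ = 2 * b * (t ^ 2 * ‖Z'' t‖) := by ring
      _ ≤ 2 * b * (C * (b + a)) := by gcongr
      _ = 2 * C * b * (b + a) := by ring
  have hsplit : t * energyDeriv Z Z' Z'' t = 2 * t * inner ℝ (Z t) (Z' t) + 2 * b ^ 2
      + 2 * t ^ 3 * inner ℝ (Z' t) (Z'' t) := by unfold energyDeriv; ring
  have henergy : energy Z Z' t = a ^ 2 + b ^ 2 := by unfold energy; ring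
  rw [hsplit, henergy]
  calc _ ≤ |2 * t * inner ℝ (Z t) (Z' t)| + |2 * b ^ 2| + |2 * t ^ 3 * inner ℝ (Z' t) (Z'' t)| :=
        abs_add_three _ _ _
    _ ≤ 2 * a * b + 2 * b ^ 2 + 2 * C * b * (b + a) := by
        rw [abs_of_nonneg (by positivity : (0 : ℝ) ≤ 2 * b ^ 2)]; linarith
    _ ≤ 3 * (1 + C) * (a ^ 2 + b ^ 2) := by
        nlinarith [sq_nonneg (a - b), mul_nonneg hC (sq_nonneg (a - b))]

theorem monotoneOn_rpow_mul_energy (hC : 0 ≤ C)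
    (hZ : ∀ t ∈ Ici (1 : ℝ), HasDerivWithinAt Z (Z' t) (Ici 1) t)
    (hZ' : ∀ t ∈ Ici (1 : ℝ), HasDerivWithinAt Z' (Z'' t) (Ici 1) t)
    (hZ'' : ∀ t ∈ Ici (1 : ℝ), t ^ 2 * ‖Z'' t‖ ≤ C * (t * ‖Z' t‖ + ‖Z t‖)) :
    MonotoneOn (fun t => t ^ (3 * (1 + C)) * energy Z Z' t) (Ici 1) :=
  monotoneOn_rpow_mul_of_hasDerivWithinAt one_pos
    (fun t ht => hasDerivWithinAt_energy (hZ t ht) (hZ' t ht)) fun t (ht : 1 < t) => by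
      linarith [neg_abs_le (t * energyDeriv Z Z' Z'' t),
        abs_mul_energyDeriv_le hC (zero_le_one.trans ht.le) (hZ'' t ht.le)]

theorem energy_le_mul_rpow (hC : 0 ≤ C)
    (hZ : ∀ t ∈ Ici (1 : ℝ), HasDerivWithinAt Z (Z' t) (Ici 1) t)
    (hZ' : ∀ t ∈ Ici (1 : ℝ), HasDerivWithinAt Z' (Z'' t) (Ici 1) t)
    (hZ'' : ∀ t ∈ Ici (1 : ℝ), t ^ 2 * ‖Z'' t‖ ≤ C * (t * ‖Z' t‖ + ‖Z t‖)) (ht : 1 ≤ t) :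
    energy Z Z' t ≤ energy Z Z' 1 * t ^ (3 * (1 + C)) :=
  le_mul_rpow_of_mul_deriv_le (fun t ht => hasDerivWithinAt_energy (hZ t ht) (hZ' t ht))
    (fun t (ht : 1 < t) => (le_abs_self _).trans
      (abs_mul_energyDeriv_le hC (zero_le_one.trans ht.le) (hZ'' t ht.le))) ht

theorem norm_deriv2_le_rpow (hC : 0 ≤ C)
    (hZ : ∀ t ∈ Ici (1 : ℝ), HasDerivWithinAt Z (Z' t) (Ici 1) t)
    (hZ' : ∀ t ∈ Ici (1 : ℝ), HasDerivWithinAt Z' (Z'' t) (Ici 1) t)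
    (hZ'' : ∀ t ∈ Ici (1 : ℝ), t ^ 2 * ‖Z'' t‖ ≤ C * (t * ‖Z' t‖ + ‖Z t‖)) (ht : 1 ≤ t) :
    ‖Z'' t‖ ≤ 2 * C * √(energy Z Z' 1) * t ^ (3 * (1 + C) / 2) := by
  have ht0 : 0 < t := one_pos.trans_le ht
  calc ‖Z'' t‖ ≤ t ^ 2 * ‖Z'' t‖ := le_mul_of_one_le_left (norm_nonneg _) (one_le_pow₀ ht)
    _ ≤ C * (t * ‖Z' t‖ + ‖Z t‖) := hZ'' t ht
    _ ≤ C * (√(energy Z Z' t) + √(energy Z Z' t)) := by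
        gcongr
        exacts [mul_norm_le_sqrt_energy, norm_le_sqrt_energy]
    _ ≤ 2 * C * √(energy Z Z' 1 * t ^ (3 * (1 + C))) := by
        have := sqrt_le_sqrt (energy_le_mul_rpow hC hZ hZ' hZ'' ht)
        nlinarith
    _ = 2 * C * √(energy Z Z' 1) * t ^ (3 * (1 + C) / 2) := by
        rw [sqrt_mul energy_nonneg, sqrt_eq_rpow (t ^ _), ← rpow_mul ht0.le]; ring_nf

end Energy

theorem stmt_1_general (k : ℕ) (Z Z' Z'' : ℝ → EuclideanSpace ℝ (Fin k))
    (A B : ℝ → (EuclideanSpace ℝ (Fin k) →L[ℝ] EuclideanSpace ℝ (Fin k)))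
    (C₁ q : ℝ) (hC₁ : 0 < C₁) (hq : 0 < q)
    (hderiv1 : ∀ t ∈ Set.Ici (1:ℝ), HasDerivWithinAt Z (Z' t) (Set.Ici 1) t)
    (hderiv2 : ∀ t ∈ Set.Ici (1:ℝ), HasDerivWithinAt Z' (Z'' t) (Set.Ici 1) t)
    (hode : ∀ t ∈ Set.Ici (1:ℝ), Z'' t = A t (Z' t) + B t (Z t))
    (hbound : ∀ t ∈ Set.Ici (1:ℝ), ‖A t‖ + t * ‖B t‖ ≤ C₁ * t ^ (-1 - q))
    (hvanish : ∀ N : ℝ, 0 < N → ∃ c : ℝ, ∀ t ∈ Set.Ici (1:ℝ), ‖Z t‖ ≤ c * t ^ (-N)) :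
    ∀ t ∈ Set.Ici (1:ℝ), Z t = 0 := by
  have hZ'' : ∀ t ∈ Ici (1 : ℝ), t ^ 2 * ‖Z'' t‖ ≤ C₁ * (t * ‖Z' t‖ + ‖Z t‖) := fun t ht => by
    rw [hode t ht]
    exact sq_mul_norm_apply_add_apply_le (zero_le_one.trans ht)
      (mul_norm_add_sq_mul_norm_le ht hC₁.le hq.le (hbound t ht)) _ _
  have hZ'vanish : VanishesToInfiniteOrder Z' :=
    VanishesToInfiniteOrder.deriv_of_norm_deriv2_le_rpow hvanish (by positivity) hderiv1 hderiv2
      fun t ht => norm_deriv2_le_rpow hC₁.le hderiv1 hderiv2 hZ'' ht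
  have hlim := tendsto_rpow_mul_energy hvanish hZ'vanish (3 * (1 + C₁))
  have hmono := monotoneOn_rpow_mul_energy hC₁.le hderiv1 hderiv2 hZ''
  intro t (ht : 1 ≤ t)
  have hle : t ^ (3 * (1 + C₁)) * energy Z Z' t ≤ 0 :=
    ge_of_tendsto hlim (eventually_atTop.2 ⟨t, fun T hT => hmono ht (ht.trans hT) hT⟩)
  have hE0 : energy Z Z' t ≤ 0 :=
    nonpos_of_mul_nonpos_right hle (rpow_pos_of_pos (one_pos.trans_le ht) _)
  exact norm_le_zero_iff.1 ((norm_le_sqrt_energy (Z' := Z')).trans_eq (sqrt_eq_zero'.2 hE0))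

/-- ODE lemma, vanishing part: if a solution of `Z'' = A Z' + B Z` with
decaying coefficients vanishes to infinite order at infinity, it is identically zero. -/
theorem stmt_1 (k : ℕ) (Z Z' Z'' : ℝ → EuclideanSpace ℝ (Fin k))
    (A B : ℝ → (EuclideanSpace ℝ (Fin k) →L[ℝ] EuclideanSpace ℝ (Fin k)))
    (C₁ q : ℝ) (hC₁ : 0 < C₁) (hq : 0 < q)
    (hA : ContinuousOn A (Set.Ici 1)) (hB : ContinuousOn B (Set.Ici 1))
    (hZ'cont : ContinuousOn Z' (Set.Ici 1)) (hZ''cont : ContinuousOn Z'' (Set.Ici 1))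
    (hderiv1 : ∀ t ∈ Set.Ici (1:ℝ), HasDerivWithinAt Z (Z' t) (Set.Ici 1) t)
    (hderiv2 : ∀ t ∈ Set.Ici (1:ℝ), HasDerivWithinAt Z' (Z'' t) (Set.Ici 1) t)
    (hode : ∀ t ∈ Set.Ici (1:ℝ), Z'' t = A t (Z' t) + B t (Z t))
    (hbound : ∀ t ∈ Set.Ici (1:ℝ), ‖A t‖ + t * ‖B t‖ ≤ C₁ * t ^ (-1 - q))
    (hvanish : ∀ N : ℝ, 0 < N → ∃ c : ℝ, ∀ t ∈ Set.Ici (1:ℝ), ‖Z t‖ ≤ c * t ^ (-N)) :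
    ∀ t ∈ Set.Ici (1:ℝ), Z t = 0 :=
  stmt_1_general k Z Z' Z'' A B C₁ q hC₁ hq hderiv1 hderiv2 hode hbound hvanish
end

section
/- Let Z : [1,∞) → ℝ^k be C² with Z''(t) = A(t)Z'(t) + B(t)Z(t) where |A(t)| + t|B(t)| ≤ C₁ t^(−1−q). Define h(t) = t²|Z'(t)|² + |Z(t)|². Then |h'(t)| ≤ (3(1+C₁)/t) h(t) for all t ≥ 1, and consequently h(1) t^(−3(1+C₁)) ≤ h(t) ≤ h(1) t^(3(1+C₁)). -/
/-!
Differentiating `h(t) = t²‖Z'‖² + ‖Z‖²` and using the equation gives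
`h' = 2t‖Z'‖² + 2t²⟪Z', AZ' + BZ⟫ + 2⟪Z, Z'⟫`. Cauchy–Schwarz, the bounds `t‖A‖ ≤ C₁`,
`t²‖B‖ ≤ C₁` and `2t‖Z‖‖Z'‖ ≤ t²‖Z'‖² + ‖Z‖²` give `t|h'| ≤ 3(1 + C₁) h`. Hence
`h(t) t^c` is nondecreasing and `h(t) t^(-c)` nonincreasing for `c = 3(1 + C₁)`.
-/

open Set Real
open scoped InnerProductSpace

section Gronwall

variable {f f' : ℝ → ℝ} {a c : ℝ}

theorem monotoneOn_mul_rpow_of_hasDerivWithinAt (ha : 0 < a)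
    (hf : ∀ t ∈ Ici a, HasDerivWithinAt f (f' t) (Ici a) t)
    (hf' : ∀ t ∈ Ioi a, 0 ≤ f' t + c / t * f t) :
    MonotoneOn (fun t => f t * t ^ c) (Ici a) := by
  have hpos : ∀ t ∈ Ici a, 0 < t := fun t ht => ha.trans_le ht
  have hderiv : ∀ t ∈ Ioi a,
      HasDerivAt (fun t => f t * t ^ c) (t ^ c * (f' t + c / t * f t)) t := by
    intro t ht
    have ht0 := (hpos t (mem_Ici.2 ht.le)).ne'
    refine (((hf t (mem_Ici.2 ht.le)).hasDerivAt (Ici_mem_nhds ht)).mul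
      (hasDerivAt_rpow_const (p := c) (Or.inl ht0))).congr_deriv ?_
    rw [rpow_sub_one ht0]
    field_simp
  refine monotoneOn_of_hasDerivWithinAt_nonneg (f' := fun t => t ^ c * (f' t + c / t * f t))
    (convex_Ici a)
    (fun t ht => (hf t ht).continuousWithinAt.mul
      (continuousAt_rpow_const t c (Or.inl (hpos t ht).ne')).continuousWithinAt)
    (fun t ht => ?_) (fun t ht => ?_) <;> rw [interior_Ici] at ht
  · rw [interior_Ici]
    exact (hderiv t ht).hasDerivWithinAt
  · exact mul_nonneg (rpow_nonneg (hpos t (mem_Ici.2 ht.le)).le c) (hf' t ht)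

theorem mul_rpow_neg_le_and_le_mul_rpow_of_abs_deriv_le (ha : 0 < a)
    (hf : ∀ t ∈ Ici a, HasDerivWithinAt f (f' t) (Ici a) t)
    (hf' : ∀ t ∈ Ici a, |f' t| ≤ c / t * f t) {t : ℝ} (ht : t ∈ Ici a) :
    f a * (t / a) ^ (-c) ≤ f t ∧ f t ≤ f a * (t / a) ^ c := by
  have ht0 : 0 < t := ha.trans_le ht
  have hlow := monotoneOn_mul_rpow_of_hasDerivWithinAt (c := c) ha hf
    (fun s hs => by linarith [neg_abs_le (f' s), hf' s (mem_Ici.2 hs.le)]) self_mem_Ici ht ht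
  have hup := monotoneOn_mul_rpow_of_hasDerivWithinAt (f := fun s => -f s) (c := -c) ha
    (fun s hs => (hf s hs).neg)
    (fun s hs => by
      have := (le_abs_self (f' s)).trans (hf' s (mem_Ici.2 hs.le))
      rw [neg_div]; linarith) self_mem_Ici ht ht
  simp only [neg_mul, neg_le_neg_iff] at hup
  have hP := rpow_pos_of_pos ht0 c
  have hQ := rpow_pos_of_pos ha c
  rw [rpow_neg ht0.le, rpow_neg ha.le] at hup
  rw [rpow_neg (div_nonneg ht0.le ha.le), div_rpow ht0.le ha.le, inv_div]
  constructor
  · rw [← mul_div_assoc, div_le_iff₀ hP]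
    exact hlow
  · rw [← mul_div_assoc, le_div_iff₀ hQ]
    rwa [← div_eq_mul_inv, ← div_eq_mul_inv, div_le_div_iff₀ hP hQ] at hup

end Gronwall

theorem mul_add_sq_mul_le_of_add_mul_le_mul_rpow {α β C q t : ℝ} (ht : 1 ≤ t) (hq : 0 ≤ q)
    (hC : 0 ≤ C) (h : α + t * β ≤ C * t ^ (-1 - q)) : t * α + t ^ 2 * β ≤ C := by
  have ht0 : 0 < t := one_pos.trans_le ht
  have hdecay : t ^ (-1 - q) ≤ t⁻¹ := by
    simpa [rpow_neg_one] using rpow_le_rpow_of_exponent_le ht (by linarith : -1 - q ≤ -1)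
  have : α + t * β ≤ C / t := h.trans (by rw [div_eq_mul_inv]; gcongr)
  rw [le_div_iff₀ ht0] at this
  linarith

section Energy

variable {E : Type*} [NormedAddCommGroup E] [InnerProductSpace ℝ E]

def weightedEnergy (Z Z' : ℝ → E) (t : ℝ) : ℝ := t ^ 2 * ‖Z' t‖ ^ 2 + ‖Z t‖ ^ 2

theorem hasDerivWithinAt_weightedEnergy {Z Z' : ℝ → E} {v : E} {s : Set ℝ} {t : ℝ}
    (hZ : HasDerivWithinAt Z (Z' t) s t) (hZ' : HasDerivWithinAt Z' v s t) :
    HasDerivWithinAt (weightedEnergy Z Z')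
      (2 * t * ‖Z' t‖ ^ 2 + t ^ 2 * (2 * ⟪Z' t, v⟫_ℝ) + 2 * ⟪Z t, Z' t⟫_ℝ) s t := by
  have hsq : HasDerivWithinAt (fun s : ℝ => s ^ 2) (2 * t) s t := by
    simpa using (hasDerivAt_pow 2 t).hasDerivWithinAt
  exact (hsq.mul hZ'.norm_sq).add hZ.norm_sq

theorem abs_weightedEnergy_deriv_le {z z' z'' : E} {α β C t : ℝ} (ht : 0 < t)
    (hα : 0 ≤ α) (hβ : 0 ≤ β) (hz'' : ‖z''‖ ≤ α * ‖z'‖ + β * ‖z‖)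
    (hαβ : t * α + t ^ 2 * β ≤ C) :
    |2 * t * ‖z'‖ ^ 2 + t ^ 2 * (2 * ⟪z', z''⟫_ℝ) + 2 * ⟪z, z'⟫_ℝ| ≤
      3 * (1 + C) / t * (t ^ 2 * ‖z'‖ ^ 2 + ‖z‖ ^ 2) := by
  set x := ‖z‖
  set y := ‖z'‖
  have hx : 0 ≤ x := norm_nonneg _
  have hy : 0 ≤ y := norm_nonneg _
  have hCS : |2 * t * y ^ 2 + t ^ 2 * (2 * ⟪z', z''⟫_ℝ) + 2 * ⟪z, z'⟫_ℝ| ≤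
      2 * t * y ^ 2 + t ^ 2 * (2 * (y * (α * y + β * x))) + 2 * (x * y) := by
    refine (abs_add_three _ _ _).trans ?_
    simp only [abs_mul, abs_two, abs_pow, abs_of_pos ht, abs_of_nonneg hy]
    gcongr
    · exact (abs_real_inner_le_norm z' z'').trans (mul_le_mul_of_nonneg_left hz'' hy)
    · exact abs_real_inner_le_norm z z'
  have htβ : t ^ 2 * β ≤ C := by nlinarith [mul_nonneg ht.le hα]
  have hC : 0 ≤ C := (by positivity : 0 ≤ t ^ 2 * β).trans htβ
  refine hCS.trans ?_
  rw [div_mul_eq_mul_div, le_div_iff₀ ht]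
  -- `2 t x y ≤ t² y² + x²` absorbs the cross terms
  nlinarith [mul_le_mul_of_nonneg_right hαβ (by positivity : 0 ≤ 2 * t ^ 2 * y ^ 2),
    mul_nonneg (by positivity : 0 ≤ t ^ 2 * β) (sq_nonneg (t * y - x)),
    sq_nonneg (t * y - x), mul_le_mul_of_nonneg_right htβ (sq_nonneg x),
    (by positivity : 0 ≤ t ^ 4 * β * y ^ 2), mul_nonneg hC (sq_nonneg (t * y)),
    mul_nonneg hC (sq_nonneg x)]

end Energy

theorem stmt_2_general (k : ℕ) (Z Z' Z'' : ℝ → EuclideanSpace ℝ (Fin k))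
    (A B : ℝ → (EuclideanSpace ℝ (Fin k) →L[ℝ] EuclideanSpace ℝ (Fin k)))
    (C₁ q : ℝ) (hC₁ : 0 < C₁) (hq : 0 < q)
    (hderiv1 : ∀ t ∈ Set.Ici (1:ℝ), HasDerivWithinAt Z (Z' t) (Set.Ici 1) t)
    (hderiv2 : ∀ t ∈ Set.Ici (1:ℝ), HasDerivWithinAt Z' (Z'' t) (Set.Ici 1) t)
    (hode : ∀ t ∈ Set.Ici (1:ℝ), Z'' t = A t (Z' t) + B t (Z t))
    (hbound : ∀ t ∈ Set.Ici (1:ℝ), ‖A t‖ + t * ‖B t‖ ≤ C₁ * t ^ (-1 - q)) :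
    ∃ h' : ℝ → ℝ,
      (∀ t ∈ Set.Ici (1:ℝ),
        HasDerivWithinAt (fun s => s ^ 2 * ‖Z' s‖ ^ 2 + ‖Z s‖ ^ 2) (h' t) (Set.Ici 1) t ∧
        |h' t| ≤ (3 * (1 + C₁) / t) * (t ^ 2 * ‖Z' t‖ ^ 2 + ‖Z t‖ ^ 2)) ∧
      (∀ t ∈ Set.Ici (1:ℝ),
        (‖Z' 1‖ ^ 2 + ‖Z 1‖ ^ 2) * t ^ (-(3 * (1 + C₁))) ≤
            t ^ 2 * ‖Z' t‖ ^ 2 + ‖Z t‖ ^ 2 ∧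
        t ^ 2 * ‖Z' t‖ ^ 2 + ‖Z t‖ ^ 2 ≤ (‖Z' 1‖ ^ 2 + ‖Z 1‖ ^ 2) * t ^ (3 * (1 + C₁))) := by
  have hdiff : ∀ t ∈ Ici (1 : ℝ),
      HasDerivWithinAt (weightedEnergy Z Z')
        (2 * t * ‖Z' t‖ ^ 2 + t ^ 2 * (2 * ⟪Z' t, Z'' t⟫_ℝ) + 2 * ⟪Z t, Z' t⟫_ℝ) (Ici 1) t ∧
      |2 * t * ‖Z' t‖ ^ 2 + t ^ 2 * (2 * ⟪Z' t, Z'' t⟫_ℝ) + 2 * ⟪Z t, Z' t⟫_ℝ| ≤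
        3 * (1 + C₁) / t * weightedEnergy Z Z' t := by
    intro t ht
    refine ⟨hasDerivWithinAt_weightedEnergy (hderiv1 t ht) (hderiv2 t ht),
      abs_weightedEnergy_deriv_le (one_pos.trans_le ht) (norm_nonneg _) (norm_nonneg _) ?_
        (mul_add_sq_mul_le_of_add_mul_le_mul_rpow ht hq.le hC₁.le (hbound t ht))⟩
    rw [hode t ht]
    exact norm_add_le_of_le ((A t).le_opNorm _) ((B t).le_opNorm _)
  refine ⟨_, hdiff, fun t ht => ?_⟩
  simpa [weightedEnergy] using mul_rpow_neg_le_and_le_mul_rpow_of_abs_deriv_le one_pos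
    (fun t ht => (hdiff t ht).1) (fun t ht => (hdiff t ht).2) ht

/-- The weighted energy `h(t) = t²|Z'|² + |Z|²` satisfies `|h'| ≤ (3(1+C₁)/t) h`
and hence the two-sided polynomial bounds `h(1) t^(-3(1+C₁)) ≤ h(t) ≤ h(1) t^(3(1+C₁))`. -/
theorem stmt_2 (k : ℕ) (Z Z' Z'' : ℝ → EuclideanSpace ℝ (Fin k))
    (A B : ℝ → (EuclideanSpace ℝ (Fin k) →L[ℝ] EuclideanSpace ℝ (Fin k)))
    (C₁ q : ℝ) (hC₁ : 0 < C₁) (hq : 0 < q)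
    (hA : ContinuousOn A (Set.Ici 1)) (hB : ContinuousOn B (Set.Ici 1))
    (hZ'cont : ContinuousOn Z' (Set.Ici 1)) (hZ''cont : ContinuousOn Z'' (Set.Ici 1))
    (hderiv1 : ∀ t ∈ Set.Ici (1:ℝ), HasDerivWithinAt Z (Z' t) (Set.Ici 1) t)
    (hderiv2 : ∀ t ∈ Set.Ici (1:ℝ), HasDerivWithinAt Z' (Z'' t) (Set.Ici 1) t)
    (hode : ∀ t ∈ Set.Ici (1:ℝ), Z'' t = A t (Z' t) + B t (Z t))
    (hbound : ∀ t ∈ Set.Ici (1:ℝ), ‖A t‖ + t * ‖B t‖ ≤ C₁ * t ^ (-1 - q)) :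
    ∃ h' : ℝ → ℝ,
      (∀ t ∈ Set.Ici (1:ℝ),
        HasDerivWithinAt (fun s => s ^ 2 * ‖Z' s‖ ^ 2 + ‖Z s‖ ^ 2) (h' t) (Set.Ici 1) t ∧
        |h' t| ≤ (3 * (1 + C₁) / t) * (t ^ 2 * ‖Z' t‖ ^ 2 + ‖Z t‖ ^ 2)) ∧
      (∀ t ∈ Set.Ici (1:ℝ),
        (‖Z' 1‖ ^ 2 + ‖Z 1‖ ^ 2) * t ^ (-(3 * (1 + C₁))) ≤
            t ^ 2 * ‖Z' t‖ ^ 2 + ‖Z t‖ ^ 2 ∧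
        t ^ 2 * ‖Z' t‖ ^ 2 + ‖Z t‖ ^ 2 ≤ (‖Z' 1‖ ^ 2 + ‖Z 1‖ ^ 2) * t ^ (3 * (1 + C₁))) :=
  stmt_2_general k Z Z' Z'' A B C₁ q hC₁ hq hderiv1 hderiv2 hode hbound
end
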